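/- arXiv:1303.1016 — 2 statements merged into one kernel-verified Lean document; each statement's English description precedes it below -/
import Mathlib

section
/- For every integer x ≥ 2, f(x) ≤ x − √x + 1 (as an inequality of real numbers, where f(x) is coerced to ℝ). -/
/-- Fuel-based helper for the recursive function `f`. For `k ≤ fuel`, `faux fuel k`
computes the value of `f k`. -/
def faux : ℕ → ℕ → ℕ
  | 0, _ => 1
  | fuel + 1, k =>
    if k ≤ 2 then 1
    else if k ≤ 4 then 2
    else
      min (faux fuel (k - 1) + 1)
        (((List.range k).filter (fun k1 => 3 ≤ k1 ∧ k1 ∣ k)).foldr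
          (fun k1 acc => min (k - k1 - k / k1 + 1 + max (faux fuel k1) (k / k1)) acc)
          (faux fuel (k - 1) + 1))

/-- `f 1 = 1`, `f 2 = 1`, `f 3 = 2`, `f 4 = 2`, and for `k > 4`,
`f k = min (f (k-1) + 1)
          (min over factorizations k = k₁·k₂ with 3 ≤ k₁ < k, 2 ≤ k₂ of
             k₁·k₂ - k₁ - k₂ + 1 + max (f k₁) k₂)`,
where the inner minimum is omitted when no such factorization exists.
(Note: for a divisor `k₁` of `k` with `3 ≤ k₁ < k`, the cofactor `k₂ = k / k₁`
automatically satisfies `k₂ ≥ 2`.) -/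
def f (k : ℕ) : ℕ := faux k k

/-!
Two moves bound `f`: the step `f (k + 1) ≤ f k + 1`, and a factorization `a * b` with `f a ≤ b`,
which gives `f (a * b) ≤ a * b - a + 1`. Let `s = ⌊√(x - 1)⌋`, so `s² < x ≤ (s + 1)²`.
For `s ≥ 3` put `a = s + 1` and `b = x / a ≥ s - 1`; stepping up from `f 4 = 2` gives
`f a ≤ a - 2 ≤ b`, so `f (a * b) ≤ a * b - s`, and stepping from `a * b` up to `x` gives
`f x ≤ x - s ≤ x - √x + 1`. For `s < 3`, stepping up from `f 1 = 1`, `f 2 = 1` or `f 4 = 2`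
already suffices.
-/

theorem List.foldr_min_le_of_mem {α β : Type*} [LinearOrder β] (g : α → β) (init : β)
    {l : List α} {a : α} (ha : a ∈ l) :
    l.foldr (fun x acc => min (g x) acc) init ≤ g a := by
  induction l with
  | nil => simp at ha
  | cons b t ih =>
    rcases List.mem_cons.1 ha with rfl | ha
    · exact min_le_left _ _
    · exact (min_le_right _ _).trans (ih ha)

theorem faux_succ_of_four_lt (fuel : ℕ) {k : ℕ} (hk : 4 < k) :
    faux (fuel + 1) k = min (faux fuel (k - 1) + 1)
      (((List.range k).filter (fun k1 => 3 ≤ k1 ∧ k1 ∣ k)).foldr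
        (fun k1 acc => min (k - k1 - k / k1 + 1 + max (faux fuel k1) (k / k1)) acc)
        (faux fuel (k - 1) + 1)) := by
  rw [faux, if_neg (by omega), if_neg (by omega)]

theorem faux_succ_of_le {fuel k : ℕ} (hk : k ≤ fuel) : faux (fuel + 1) k = faux fuel k := by
  induction fuel generalizing k with
  | zero =>
    obtain rfl : k = 0 := by omega
    rfl
  | succ fuel ih =>
    by_cases h4 : k ≤ 4
    · simp only [faux]
      split_ifs <;> rfl
    · have hlt : ∀ j < k, faux (fuel + 1) j = faux fuel j := fun j hj => ih (by omega)
      have hk4 : 4 < k := by omega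
      rw [faux_succ_of_four_lt _ hk4, faux_succ_of_four_lt _ hk4, hlt _ (by omega)]
      congr 1
      refine List.foldr_ext _ _ _ fun j hj _ => ?_
      rw [hlt j (List.mem_range.1 (List.mem_of_mem_filter hj))]

theorem faux_eq_f {fuel k : ℕ} (hk : k ≤ fuel) : faux fuel k = f k := by
  induction fuel, hk using Nat.le_induction with
  | base => rfl
  | succ fuel hk ih => rw [faux_succ_of_le hk, ih]

theorem f_succ_le (k : ℕ) : f (k + 1) ≤ f k + 1 := by
  rcases le_or_gt k 3 with hk | hk
  · interval_cases k <;> decide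
  · exact (faux_succ_of_four_lt k (by omega)).trans_le (min_le_left _ _)

theorem f_add_le (m d : ℕ) : f (m + d) ≤ f m + d := by
  induction d with
  | zero => rfl
  | succ d ih => exact (f_succ_le (m + d)).trans (by omega)

theorem f_add_le_add_of_le {m x : ℕ} (h : m ≤ x) : f x + m ≤ f m + x := by
  have := f_add_le m (x - m)
  rw [Nat.add_sub_cancel' h] at this
  omega

theorem f_mul_le {a b : ℕ} (ha : 3 ≤ a) (hb : 2 ≤ b) :
    f (a * b) ≤ a * b - a - b + 1 + max (f a) b := by
  have hab : a < a * b := lt_mul_of_one_lt_right (by omega) hb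
  have hmem : a ∈ (List.range (a * b)).filter (fun k1 => 3 ≤ k1 ∧ k1 ∣ a * b) := by
    simp [hab, ha]
  obtain ⟨n, hn⟩ : ∃ n, a * b = n + 1 := ⟨a * b - 1, by omega⟩
  have key := (faux_succ_of_four_lt n (k := a * b) (by nlinarith)).trans_le
    ((min_le_right _ _).trans (List.foldr_min_le_of_mem _ _ hmem))
  rw [Nat.mul_div_cancel_left b (by omega), faux_eq_f (fuel := n) (k := a) (by omega), ← hn] at key
  exact key

theorem f_mul_add_le {a b : ℕ} (ha : 3 ≤ a) (hb : 2 ≤ b) (hfa : f a ≤ b) :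
    f (a * b) + a ≤ a * b + 1 := by
  have := f_mul_le ha hb
  rw [max_eq_right hfa] at this
  have : a + b ≤ a * b := Nat.add_le_mul (by omega) hb
  omega

theorem f_add_le_of_mul_self_lt {s x : ℕ} (h : s * s < x) : f x + s ≤ x := by
  rcases lt_or_ge s 3 with hs | hs
  · obtain ⟨m, hm, hfm⟩ : ∃ m, m ≤ x ∧ f m + s ≤ m := by
      interval_cases s
      · exact ⟨1, by omega, by decide⟩
      · exact ⟨2, by omega, by decide⟩
      · exact ⟨4, by omega, by decide⟩
    have := f_add_le_add_of_le hm
    omega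
  · have hb : s - 1 ≤ x / (s + 1) := by
      rw [Nat.le_div_iff_mul_le (by omega)]
      obtain ⟨t, rfl⟩ : ∃ t, s = t + 1 := ⟨s - 1, by omega⟩
      simp only [Nat.add_sub_cancel]
      nlinarith
    have hfa : f (s + 1) ≤ x / (s + 1) := by
      have := f_add_le_add_of_le (m := 4) (x := s + 1) (by omega)
      have : f 4 = 2 := by decide
      omega
    have hmul := f_mul_add_le (by omega) (by omega) hfa
    have hstep := f_add_le_add_of_le (Nat.mul_div_le x (s + 1))
    omega

theorem stmt_0_general (x : ℕ) :
    (f x : ℝ) ≤ (x : ℝ) - Real.sqrt x + 1 := by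
  rcases Nat.eq_zero_or_pos x with rfl | hx
  · simp [show f 0 = 1 from rfl]
  have hlo : Nat.sqrt (x - 1) * Nat.sqrt (x - 1) ≤ x - 1 := Nat.sqrt_le (x - 1)
  have hhi : x - 1 < (Nat.sqrt (x - 1) + 1) * (Nat.sqrt (x - 1) + 1) := Nat.lt_succ_sqrt (x - 1)
  generalize Nat.sqrt (x - 1) = s at hlo hhi
  have hfx : (f x : ℝ) + s ≤ x := by exact_mod_cast f_add_le_of_mul_self_lt (by omega)
  have hsqrt : Real.sqrt x ≤ s + 1 := by
    rw [Real.sqrt_le_left (by positivity)]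
    exact_mod_cast (show x ≤ (s + 1) ^ 2 by rw [sq]; omega)
  linarith

/-- For every integer `x ≥ 2`, `f x ≤ x - √x + 1` as real numbers. -/
theorem stmt_0 (x : ℕ) (hx : 2 ≤ x) :
    (f x : ℝ) ≤ (x : ℝ) - Real.sqrt x + 1 :=
  stmt_0_general x
end

section
/- For every integer v ≥ 3, the least integer k ≥ 2 such that k − f(k) ≥ v is equal to min( (v+1)·f(v+1), (v+2)·(f(v+2) − 1) ). -/
section FoldrMin

variable {α β : Type*} [LinearOrder α] (e : β → α) (i : α)

theorem foldr_min_le_of_mem {l : List β} {b : β} (hb : b ∈ l) :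
    l.foldr (fun b acc => min (e b) acc) i ≤ e b := by
  induction l with
  | nil => simp at hb
  | cons a l ih =>
    rcases List.mem_cons.1 hb with rfl | hb
    · exact min_le_left _ _
    · exact (min_le_right _ _).trans (ih hb)

theorem foldr_min_eq_init_or_exists (l : List β) :
    l.foldr (fun b acc => min (e b) acc) i = i ∨
      ∃ b ∈ l, l.foldr (fun b acc => min (e b) acc) i = e b := by
  induction l with
  | nil => exact Or.inl rfl
  | cons a l ih =>
    rw [List.foldr_cons]
    rcases min_choice (e a) (l.foldr (fun b acc => min (e b) acc) i) with h | h <;> rw [h]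
    · exact Or.inr ⟨a, List.mem_cons_self, rfl⟩
    · rcases ih with ih | ⟨b, hb, ih⟩
      · exact Or.inl ih
      · exact Or.inr ⟨b, List.mem_cons_of_mem _ hb, ih⟩

theorem foldr_min_congr {e' : β → α} {l : List β} (h : ∀ b ∈ l, e b = e' b) :
    l.foldr (fun b acc => min (e b) acc) i = l.foldr (fun b acc => min (e' b) acc) i := by
  simpa only [List.foldr_map] using congrArg (List.foldr min i) (List.map_congr_left h)

end FoldrMin

theorem faux_eq_faux {k m n : ℕ} (hm : k ≤ m) (hn : k ≤ n) : faux m k = faux n k := by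
  induction k using Nat.strong_induction_on generalizing m n with
  | _ k ih =>
  rcases Nat.eq_zero_or_pos k with rfl | hk
  · cases m <;> cases n <;> rfl
  obtain ⟨m, rfl⟩ : ∃ m', m = m' + 1 := ⟨m - 1, by omega⟩
  obtain ⟨n, rfl⟩ : ∃ n', n = n' + 1 := ⟨n - 1, by omega⟩
  simp only [faux]
  rw [@ih (k - 1) (by omega) m n (by omega) (by omega)]
  refine if_congr Iff.rfl rfl <| if_congr Iff.rfl rfl <| congrArg _ <| foldr_min_congr _ _ ?_
  intro a ha
  have := List.mem_range.1 (List.mem_of_mem_filter ha)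
  rw [@ih a this m n (by omega) (by omega)]

theorem f_eq_min {k : ℕ} (hk : 5 ≤ k) :
    f k = min (f (k - 1) + 1)
      (((List.range k).filter (fun k1 => 3 ≤ k1 ∧ k1 ∣ k)).foldr
        (fun k1 acc => min (k - k1 - k / k1 + 1 + max (f k1) (k / k1)) acc) (f (k - 1) + 1)) := by
  obtain ⟨n, rfl⟩ : ∃ n, k = n + 1 := ⟨k - 1, by omega⟩
  rw [f, faux, if_neg (by omega), if_neg (by omega), Nat.add_sub_cancel]
  congr 1
  refine foldr_min_congr _ _ ?_
  intro a ha
  have := List.mem_range.1 (List.mem_of_mem_filter ha)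
  rw [f, faux_eq_faux (by omega) le_rfl]

theorem sub_one_mul_sub_one_add_add {a b : ℕ} (ha : 1 ≤ a) (hb : 1 ≤ b) :
    (a - 1) * (b - 1) + a + b = a * b + 1 := by
  obtain ⟨a, rfl⟩ : ∃ a', a = a' + 1 := ⟨a - 1, by omega⟩
  obtain ⟨b, rfl⟩ : ∃ b', b = b' + 1 := ⟨b - 1, by omega⟩
  simp only [Nat.add_sub_cancel]
  ring

theorem mul_sub_sub_div_add_one {k1 k2 : ℕ} (h1 : 2 ≤ k1) (h2 : 2 ≤ k2) :
    k1 * k2 - k1 - k1 * k2 / k1 + 1 = (k1 - 1) * (k2 - 1) := by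
  have hid := sub_one_mul_sub_one_add_add (a := k1) (b := k2) (by omega) (by omega)
  have hpos : 0 < (k1 - 1) * (k2 - 1) := Nat.mul_pos (by omega) (by omega)
  rw [Nat.mul_div_cancel_left _ (by omega)]
  omega

theorem f_le_f_pred_add_one {k : ℕ} (hk : 5 ≤ k) : f k ≤ f (k - 1) + 1 :=
  (f_eq_min hk).trans_le (min_le_left _ _)

theorem f_mul_le_s7 {k1 k2 : ℕ} (h1 : 3 ≤ k1) (h2 : 1 ≤ k2) :
    f (k1 * k2) ≤ (k1 - 1) * (k2 - 1) + max (f k1) k2 := by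
  rcases h2.eq_or_lt with rfl | h2
  · simp
  have hlt : k1 < k1 * k2 := lt_mul_of_one_lt_right (by omega) h2
  have hmem : k1 ∈ (List.range (k1 * k2)).filter (fun k1' => 3 ≤ k1' ∧ k1' ∣ k1 * k2) := by
    simp only [List.mem_filter, List.mem_range, decide_eq_true_eq]
    exact ⟨hlt, h1, dvd_mul_right _ _⟩
  refine ((f_eq_min (by nlinarith)).trans_le (min_le_right _ _)).trans ?_
  refine (foldr_min_le_of_mem _ _ hmem).trans_eq ?_
  rw [mul_sub_sub_div_add_one (by omega) h2, Nat.mul_div_cancel_left _ (by omega)]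

theorem f_eq_pred_add_one_or_eq_mul {k : ℕ} (hk : 5 ≤ k) :
    f k = f (k - 1) + 1 ∨ ∃ k1 k2, 3 ≤ k1 ∧ 2 ≤ k2 ∧ k1 * k2 = k ∧
      f k = (k1 - 1) * (k2 - 1) + max (f k1) k2 := by
  have hf := f_eq_min hk
  rcases foldr_min_eq_init_or_exists (fun k1 => k - k1 - k / k1 + 1 + max (f k1) (k / k1))
    (f (k - 1) + 1) ((List.range k).filter fun k1 => 3 ≤ k1 ∧ k1 ∣ k) with
    hfold | ⟨k1, hk1, hfold⟩ <;> rw [hfold] at hf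
  · exact Or.inl (hf.trans (min_self _))
  simp only [List.mem_filter, List.mem_range, decide_eq_true_eq] at hk1
  obtain ⟨hlt, h1, k2, rfl⟩ := hk1
  have h2 : 2 ≤ k2 := by
    by_contra! h
    interval_cases k2 <;> omega
  rw [mul_sub_sub_div_add_one (by omega) h2, Nat.mul_div_cancel_left _ (by omega)] at hf
  rcases min_choice (f (k1 * k2 - 1) + 1) ((k1 - 1) * (k2 - 1) + max (f k1) k2) with h | h
  · exact Or.inl (hf.trans h)
  · exact Or.inr ⟨k1, k2, h1, h2, rfl, hf.trans h⟩

theorem f_le_add_sub {j k : ℕ} (h : j ≤ k) : f k ≤ f j + (k - j) := by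
  induction k, h using Nat.le_induction with
  | base => simp
  | succ k hjk ih => have := f_succ_le k; omega

theorem f_le_self {k : ℕ} (hk : 1 ≤ k) : f k ≤ k := by
  have := f_le_add_sub hk
  have : f 1 = 1 := by decide
  omega

theorem f_add_two_le {k : ℕ} (hk : 4 ≤ k) : f k + 2 ≤ k := by
  have := f_le_add_sub hk
  have : f 4 = 2 := by decide
  omega

theorem f_pred_mul_le {k1 k2 : ℕ} (h1 : 3 ≤ k1) (h2 : 2 ≤ k2) :
    f (k1 * k2 - 1) ≤ (k1 - 1) * (k2 - 1) + max (f k1) k2 := by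
  obtain ⟨c, rfl⟩ : ∃ c, k2 = c + 2 := ⟨k2 - 2, by omega⟩
  have hsplit : k1 * (c + 2) - 1 = k1 * (c + 1) + (k1 - 1) := by
    have : k1 * (c + 2) = k1 * (c + 1) + k1 := by ring
    omega
  have hstep := f_le_add_sub (Nat.le_add_right (k1 * (c + 1)) (k1 - 1))
  have hmul := f_mul_le_s7 h1 (Nat.le_add_left 1 c)
  have hmax : max (f k1) (c + 1) ≤ max (f k1) (c + 2) := max_le_max le_rfl (by omega)
  have hdist : (k1 - 1) * (c + 2 - 1) = (k1 - 1) * (c + 1 - 1) + (k1 - 1) := by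
    simp only [Nat.add_sub_cancel, show c + 2 - 1 = c + 1 by omega]
    ring
  rw [hsplit, hdist]
  omega

theorem f_le_f_succ (k : ℕ) : f k ≤ f (k + 1) := by
  by_cases hk : 5 ≤ k + 1
  · rcases f_eq_pred_add_one_or_eq_mul hk with h | ⟨k1, k2, h1, h2, hk12, h⟩
    · rw [h, Nat.add_sub_cancel]
      omega
    · rw [h, ← Nat.add_sub_cancel k 1, ← hk12]
      exact f_pred_mul_le h1 h2
  · have : k ≤ 3 := by omega
    interval_cases k <;> decide

theorem f_monotone : Monotone f := monotone_nat_of_le_succ f_le_f_succ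

theorem add_f_le_of_le {t j k : ℕ} (hj : t + f j ≤ j) (hjk : j ≤ k) : t + f k ≤ k := by
  have := f_le_add_sub hjk
  omega

theorem add_f_mul_le {t x c : ℕ} (hx : 3 ≤ x) (hc : 1 ≤ c) (hcf : c ≤ f x)
    (hxc : x + c = t + 1 + f x) : t + f (x * c) ≤ x * c := by
  have hmul := f_mul_le_s7 hx hc
  rw [max_eq_left hcf] at hmul
  have := sub_one_mul_sub_one_add_add (a := x) (b := c) (by omega) hc
  omega

def threshold (v : ℕ) : ℕ := min ((v + 1) * f (v + 1)) ((v + 2) * (f (v + 2) - 1))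

theorem threshold_eq_mul {t : ℕ} (ht : 3 ≤ t) :
    ∃ x c, threshold t = x * c ∧ 3 ≤ x ∧ x ≤ t + 2 ∧ 2 ≤ c ∧ c ≤ f x ∧ x + c = t + 1 + f x := by
  have h1 : 2 ≤ f (t + 1) := (show f 3 = 2 by decide) ▸ f_monotone (show 3 ≤ t + 1 by omega)
  have h2 : 3 ≤ f (t + 2) := (show f 5 = 3 by decide) ▸ f_monotone (show 5 ≤ t + 2 by omega)
  rcases min_choice ((t + 1) * f (t + 1)) ((t + 2) * (f (t + 2) - 1)) with h | h
  · exact ⟨t + 1, f (t + 1), h, by omega, by omega, h1, le_rfl, by omega⟩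
  · exact ⟨t + 2, f (t + 2) - 1, h, by omega, le_rfl, by omega, by omega, by omega⟩

theorem two_le_threshold {t : ℕ} (ht : 3 ≤ t) : 2 ≤ threshold t := by
  obtain ⟨x, c, h, hx, -, hc, -⟩ := threshold_eq_mul ht
  rw [h]
  nlinarith

theorem add_f_threshold_le {t : ℕ} (ht : 3 ≤ t) : t + f (threshold t) ≤ threshold t := by
  obtain ⟨x, c, h, hx, -, hc, hcf, hxc⟩ := threshold_eq_mul ht
  rw [h]
  exact add_f_mul_le hx (by omega) hcf hxc

theorem add_mul_add_two_le {t s A : ℕ} (h1 : t + s + 3 ≤ A) (h2 : 2 * (t + 1) ≤ A) :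
    (t + s + 1) * (s + 2) ≤ A * (s + 1) := by
  rcases le_or_gt t (s + 1) with hts | hts
  · nlinarith [Nat.mul_le_mul_right (s + 1) h1]
  · nlinarith [Nat.mul_le_mul_right (s + 1) h2, Nat.mul_le_mul_left s hts]

theorem mul_f_le_mul_succ {t s x c : ℕ} (ht : 1 ≤ t) (hx : 3 ≤ x) (hxs : x ≤ t + s + 1)
    (hc : 2 ≤ c) (hcf : c ≤ f x) (hxc : x + c = t + 1 + f x) (hM : t + s + 3 ≤ x * c) :
    (t + s + 1) * f (t + s + 1) ≤ x * c * (s + 1) := by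
  have hfn : f (t + s + 1) ≤ c + s := by
    have := f_le_add_sub hxs
    omega
  by_cases hA : t + s + 2 ≤ x * (c - 1)
  · have hcx : c ≤ x := hcf.trans (f_le_self (by omega))
    calc (t + s + 1) * f (t + s + 1) ≤ (t + s + 1) * (c + s) := Nat.mul_le_mul_left _ hfn
      _ ≤ x * c * (s + 1) := by
        obtain ⟨c, rfl⟩ : ∃ c', c = c' + 1 := ⟨c - 1, by omega⟩
        rw [Nat.add_sub_cancel] at hA
        -- the gap is `s (x c' - t - s - 2) + s (x - c') + (c' + 1)(x - t - 1)`
        nlinarith [Nat.mul_le_mul_left s hA, Nat.mul_le_mul_left s hcx,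
          Nat.mul_le_mul_left (c + 1) (show t + 1 ≤ x by omega)]
  · have hfn' : f (t + s + 1) ≤ s + 2 := by
      rcases (show c = 2 ∨ 3 ≤ c by omega) with rfl | hc3
      · omega
      · have hP := add_f_mul_le (t := t - 1) (c := c - 1) hx (by omega) (by omega) (by omega)
        have := add_f_le_of_le hP (show x * (c - 1) ≤ t + s + 1 by omega)
        omega
    calc (t + s + 1) * f (t + s + 1) ≤ (t + s + 1) * (s + 2) := Nat.mul_le_mul_left _ hfn'
      _ ≤ x * c * (s + 1) :=
        add_mul_add_two_le hM (by nlinarith [Nat.mul_le_mul (show t + 1 ≤ x by omega) hc])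

theorem mul_f_le_threshold_mul {t s : ℕ} (ht : 3 ≤ t) (hs : 1 ≤ s) (hf : s + 3 ≤ f (t + s + 2)) :
    (t + s + 1) * f (t + s + 1) ≤ threshold t * (s + 1) := by
  obtain ⟨x, c, hM, hx, hxt, hc, hcf, hxc⟩ := threshold_eq_mul ht
  have hlarge : t + s + 3 ≤ threshold t := by
    by_contra! h
    have := add_f_le_of_le (add_f_threshold_le ht) (show threshold t ≤ t + s + 2 by omega)
    omega
  rw [hM] at hlarge ⊢
  exact mul_f_le_mul_succ (by omega) hx (by omega) hc hcf hxc hlarge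

theorem threshold_le_mul {v k1 k2 : ℕ} (hv : 3 ≤ v) (h2 : 1 ≤ k2)
    (hkey : v + 1 + max (f k1) k2 ≤ k1 + k2)
    (ih : ∀ u, 3 ≤ u → u + f k1 ≤ k1 → threshold u ≤ k1) : threshold v ≤ k1 * k2 := by
  rcases le_or_gt (f k1) k2 with hm | hm
  · rw [max_eq_right hm] at hkey
    calc threshold v ≤ (v + 1) * f (v + 1) := min_le_left _ _
      _ ≤ k1 * k2 := Nat.mul_le_mul (by omega) ((f_monotone (by omega)).trans hm)
  rw [max_eq_left hm.le] at hkey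
  have := f_le_self (show 1 ≤ k1 by omega)
  obtain ⟨t, ht⟩ : ∃ t, t + f k1 = k1 := ⟨k1 - f k1, by omega⟩
  rcases le_or_gt v t with hvt | htv
  · exact (ih v hv (by omega)).trans (Nat.le_mul_of_pos_right k1 h2)
  rcases le_or_gt (t + f (v + 2)) (v + 2) with hg | hg
  · calc threshold v ≤ (v + 2) * (f (v + 2) - 1) := min_le_right _ _
      _ ≤ k1 * k2 := Nat.mul_le_mul (by omega) (by omega)
  have hf := f_add_two_le (show 4 ≤ v + 2 by omega)
  obtain ⟨s, rfl⟩ : ∃ s, v = t + s := ⟨v - t, by omega⟩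
  calc threshold (t + s) ≤ (t + s + 1) * f (t + s + 1) := min_le_left _ _
    _ ≤ threshold t * (s + 1) := mul_f_le_threshold_mul (by omega) (by omega) (by omega)
    _ ≤ k1 * k2 := Nat.mul_le_mul (ih t (by omega) (by omega)) (by omega)

theorem threshold_le {v k : ℕ} (hv : 3 ≤ v) (hk : v + f k ≤ k) : threshold v ≤ k := by
  induction k using Nat.strong_induction_on generalizing v with
  | _ k ih =>
  have hk5 : 5 ≤ k := by
    by_contra! h
    have : f 0 = 1 ∧ f 1 = 1 ∧ f 2 = 1 ∧ f 3 = 2 ∧ f 4 = 2 := by decide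
    interval_cases k <;> omega
  by_cases hprev : v + f (k - 1) ≤ k - 1
  · exact (ih (k - 1) (by omega) hv hprev).trans (Nat.sub_le k 1)
  -- `k - f k` has just reached `v`, so `f k = f (k - 1)` comes from a factorization
  rcases f_eq_pred_add_one_or_eq_mul hk5 with h | ⟨k1, k2, h1, h2, rfl, h⟩
  · omega
  have := sub_one_mul_sub_one_add_add (a := k1) (b := k2) (by omega) (by omega)
  exact threshold_le_mul hv (by omega) (by omega) fun u hu huk =>
    ih k1 (lt_mul_of_one_lt_right (by omega) h2) hu huk

/-- For every integer `v ≥ 3`, the least integer `k ≥ 2` such that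
`k - f k ≥ v` equals `min ((v+1)·f(v+1)) ((v+2)·(f(v+2) - 1))`. -/
theorem stmt_7 (v : ℕ) (hv : 3 ≤ v) :
    IsLeast {k : ℕ | 2 ≤ k ∧ v + f k ≤ k}
      (min ((v + 1) * f (v + 1)) ((v + 2) * (f (v + 2) - 1))) :=
  ⟨⟨two_le_threshold hv, add_f_threshold_le hv⟩, fun _ hk => threshold_le hv hk.2⟩
end
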